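/- Let $M$ be an $\alpha$-balanced module lattice of rank $r$ over a number field $K$, and let $M' \subseteq M$ be a sub-module lattice of index $q$ (i.e., $|M/M'| = q$). Then $M'$ is $(\alpha \cdot q)$-balanced. -/

import Mathlib

open scoped NumberField

/-!
Since `M/M'` has order `q`, we have `q • M ⊆ M' ⊆ M`, so `λ_j(M) ≤ λ_j(M') ≤ q λ_j(M)` for every
`j`, and therefore `λ_{i+1}(M') ≤ q λ_{i+1}(M) ≤ α q λ_i(M) ≤ α q λ_i(M')`.
The lower bound `λ_i(M) ≤ λ_i(M')` fails only through the junk value `sInf ∅ = 0`, when `M'`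
has no `i` independent vectors; then `λ_{i+1}(M') = 0` as well. For `α < 0` the balance
hypothesis forces `λ_i(M) = 0`, hence both sides vanish.
-/

/-- The `j`-th successive minimum of a set `M` (w.r.t. `R`-linear independence). -/
noncomputable def succMin (R : Type*) [Semiring R] {V : Type*} [NormedAddCommGroup V]
    [Module R V] (M : Set V) (j : ℕ) : ℝ :=
  sInf {lam : ℝ | 0 < lam ∧ ∃ v : Fin j → V,
    (∀ i, v i ∈ M) ∧ LinearIndependent R v ∧ ∀ i, ‖v i‖ ≤ lam}

section SuccMin

variable (R : Type*) [Semiring R] {V : Type*} [NormedAddCommGroup V] [Module R V]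

def succMinSet (M : Set V) (j : ℕ) : Set ℝ :=
  {lam : ℝ | 0 < lam ∧ ∃ v : Fin j → V,
    (∀ i, v i ∈ M) ∧ LinearIndependent R v ∧ ∀ i, ‖v i‖ ≤ lam}

theorem succMin_eq_sInf (M : Set V) (j : ℕ) : succMin R M j = sInf (succMinSet R M j) := rfl

theorem succMinSet_bddBelow (M : Set V) (j : ℕ) : BddBelow (succMinSet R M j) :=
  ⟨0, fun _ h => h.1.le⟩

theorem succMin_nonneg (M : Set V) (j : ℕ) : 0 ≤ succMin R M j :=
  Real.sInf_nonneg fun _ h => h.1.le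

theorem succMinSet_mono {S T : Set V} (hTS : T ⊆ S) (j : ℕ) :
    succMinSet R T j ⊆ succMinSet R S j := by
  rintro lam ⟨hpos, v, hv, hli, hnorm⟩
  exact ⟨hpos, v, fun i => hTS (hv i), hli, hnorm⟩

theorem succMin_le_succMin_of_subset {S T : Set V} (hTS : T ⊆ S) {j : ℕ}
    (hT : (succMinSet R T j).Nonempty) : succMin R S j ≤ succMin R T j :=
  csInf_le_csInf (succMinSet_bddBelow R S j) hT (succMinSet_mono R hTS j)

theorem succMinSet_succ_eq_empty {M : Set V} {j : ℕ} (h : succMinSet R M j = ∅) :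
    succMinSet R M (j + 1) = ∅ := by
  refine Set.eq_empty_of_forall_notMem fun lam ⟨hpos, v, hv, hli, hnorm⟩ => ?_
  have hlam : lam ∈ succMinSet R M j :=
    ⟨hpos, v ∘ Fin.castSucc, fun i => hv _, hli.comp _ (Fin.castSucc_injective j),
      fun i => hnorm _⟩
  simp [h] at hlam

end SuccMin

section Scaling

variable (K : Type*) [DivisionRing K] [CharZero K] {V : Type*} [NormedAddCommGroup V]
  [Module K V]

theorem nsmul_mem_succMinSet {S T : Set V} {q : ℕ} (hq : q ≠ 0) (hST : ∀ x ∈ S, q • x ∈ T)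
    {j : ℕ} {lam : ℝ} (hlam : lam ∈ succMinSet K S j) :
    (q : ℝ) * lam ∈ succMinSet K T j := by
  obtain ⟨hpos, v, hv, hli, hnorm⟩ := hlam
  have hqK : (q : K) ≠ 0 := Nat.cast_ne_zero.mpr hq
  refine ⟨by positivity, fun i => q • v i, fun i => hST _ (hv i), ?_, fun i => ?_⟩
  · convert hli.units_smul fun _ => Units.mk0 (q : K) hqK using 1
    ext i
    simp [Units.smul_def, Nat.cast_smul_eq_nsmul]
  · calc ‖q • v i‖ ≤ q * ‖v i‖ := norm_nsmul_le
      _ ≤ q * lam := by gcongr; exact hnorm i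

theorem succMin_le_mul_succMin {S T : Set V} {q : ℕ} (hq : q ≠ 0) (hTS : T ⊆ S)
    (hST : ∀ x ∈ S, q • x ∈ T) (j : ℕ) : succMin K T j ≤ q * succMin K S j := by
  rcases (succMinSet K S j).eq_empty_or_nonempty with hS | hS
  · have hT : succMinSet K T j = ∅ := Set.subset_eq_empty (succMinSet_mono K hTS j) hS
    rw [succMin_eq_sInf, succMin_eq_sInf, hS, hT, Real.sInf_empty, mul_zero]
  · rw [succMin_eq_sInf, succMin_eq_sInf, ← smul_eq_mul,
      ← Real.sInf_smul_of_nonneg (by positivity)]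
    refine csInf_le_csInf (succMinSet_bddBelow K T j) hS.smul_set ?_
    rintro _ ⟨lam, hlam, rfl⟩
    exact nsmul_mem_succMinSet K hq hST hlam

end Scaling

theorem stmt2_general
    {K : Type*} [Field K] [NumberField K]
    {V : Type*} [NormedAddCommGroup V]
    [Module K V] [Module (𝓞 K) V]
    (r : ℕ)
    (M M' : Submodule (𝓞 K) V)
    (hle : M' ≤ M)
    (q : ℕ) (hq : 0 < q)
    (hidx : M'.toAddSubgroup.relIndex M.toAddSubgroup = q)
    (α : ℝ)
    (hbal : ∀ i : ℕ, 1 ≤ i → i < r →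
      succMin K (M : Set V) (i + 1) ≤ α * succMin K (M : Set V) i) :
    ∀ i : ℕ, 1 ≤ i → i < r →
      succMin K (M' : Set V) (i + 1) ≤ (α * q) * succMin K (M' : Set V) i := by
  have hqM : ∀ x ∈ (M : Set V), q • x ∈ (M' : Set V) := fun x hx =>
    hidx ▸ M'.toAddSubgroup.nsmul_relIndex_mem hx
  have hscale := succMin_le_mul_succMin K hq.ne' hle hqM
  intro i hi hir
  have hbal_i := hbal i hi hir
  rcases (succMinSet K (M' : Set V) i).eq_empty_or_nonempty with hempty | hne
  · rw [succMin_eq_sInf, succMin_eq_sInf, hempty, succMinSet_succ_eq_empty K hempty,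
      Real.sInf_empty, mul_zero]
  have hq' : (0 : ℝ) < q := Nat.cast_pos.mpr hq
  rcases le_or_gt 0 α with hα | hα
  · calc succMin K (M' : Set V) (i + 1) ≤ q * succMin K (M : Set V) (i + 1) := hscale (i + 1)
      _ ≤ q * (α * succMin K (M : Set V) i) := by gcongr
      _ = (α * q) * succMin K (M : Set V) i := by ring
      _ ≤ (α * q) * succMin K (M' : Set V) i :=
        mul_le_mul_of_nonneg_left (succMin_le_succMin_of_subset K hle hne) (by positivity)
  · have hMi : succMin K (M : Set V) i = 0 := by
      nlinarith [succMin_nonneg K (M : Set V) i, succMin_nonneg K (M : Set V) (i + 1)]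
    have hM'i : succMin K (M' : Set V) i = 0 :=
      le_antisymm (by simpa [hMi] using hscale i) (succMin_nonneg K _ i)
    have hM'succ : succMin K (M' : Set V) (i + 1) ≤ 0 := by
      simpa [hMi] using (hscale (i + 1)).trans (mul_le_mul_of_nonneg_left hbal_i hq'.le)
    rwa [hM'i, mul_zero]

/-- If `M` is an `α`-balanced module lattice of rank `r` over a
number field `K` (i.e. `λ^K_{i+1}(M) ≤ α λ^K_i(M)` for all `1 ≤ i < r`) and
`M' ⊆ M` is a sub-module lattice of index `q`, then `M'` is `(α q)`-balanced. -/
theorem stmt2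
    {K : Type*} [Field K] [NumberField K]
    {V : Type*} [NormedAddCommGroup V]
    [Module K V] [Module (𝓞 K) V] [IsScalarTower (𝓞 K) K V]
    (r : ℕ) (hr : 0 < r)
    (M M' : Submodule (𝓞 K) V) [DiscreteTopology M]
    [Module.Free (𝓞 K) M] (hrank : Module.finrank (𝓞 K) M = r)
    (hle : M' ≤ M)
    (q : ℕ) (hq : 0 < q)
    (hidx : M'.toAddSubgroup.relIndex M.toAddSubgroup = q)
    (α : ℝ)
    (hbal : ∀ i : ℕ, 1 ≤ i → i < r →
      succMin K (M : Set V) (i + 1) ≤ α * succMin K (M : Set V) i) :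
    ∀ i : ℕ, 1 ≤ i → i < r →
      succMin K (M' : Set V) (i + 1) ≤ (α * q) * succMin K (M' : Set V) i :=
  stmt2_general r M M' hle q hq hidx α hbal
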